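/- arXiv:2512.11809 — 2 statements merged into one kernel-verified Lean document; each statement's English description precedes it below -/
import Mathlib

section
/- Let X be an Archimedean vector lattice equipped with a convergence θ (satisfying axioms (1)–(4)) which also satisfies property (*), and assume e ∈ X₊ is a θ-unit. Then for a positive net (x_α)_{α∈A} in X and x ∈ X₊ the following are equivalent: (i) x_α →uθ x; (ii) x_α ∧ k e →θ x ∧ k e for every k ∈ ℕ. -/
open Filter

/-- A convergence structure `θ` on a vector lattice `X`, assigning to nets (maps from
nonempty directed preordered index types) limit points, and satisfying axioms (1)–(4):
(1) constant nets converge; (2) linearity, and `t • x →θ 0` as the scalar net `t → 0`;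
(3) domination: if `x_α →θ 0` and `|y_α| ≤ |x_α|` then `y_α →θ 0`;
(4) every subnet of a `θ`-convergent net `θ`-converges to the same limit. -/
structure VLConvergence (X : Type*) [Lattice X] [AddCommGroup X] [Module ℝ X] where
  conv : ∀ {ι : Type} [Preorder ι] [IsDirected ι (· ≤ ·)] [Nonempty ι], (ι → X) → X → Prop
  conv_const : ∀ {ι : Type} [Preorder ι] [IsDirected ι (· ≤ ·)] [Nonempty ι] (x : X),
    conv (fun _ : ι => x) x
  conv_add_smul : ∀ {ι : Type} [Preorder ι] [IsDirected ι (· ≤ ·)] [Nonempty ι]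
    (f g : ι → X) (x y : X) (l : ℝ),
    conv f x → conv g y → conv (fun α => f α + l • g α) (x + l • y)
  conv_smul_zero : ∀ {ι : Type} [Preorder ι] [IsDirected ι (· ≤ ·)] [Nonempty ι]
    (t : ι → ℝ) (x : X), Filter.Tendsto t Filter.atTop (nhds (0 : ℝ)) →
    conv (fun α => t α • x) (0 : X)
  conv_dominated : ∀ {ι : Type} [Preorder ι] [IsDirected ι (· ≤ ·)] [Nonempty ι]
    (f g : ι → X), conv f 0 → (∀ α, |g α| ≤ |f α|) → conv g 0
  conv_subnet : ∀ {ι κ : Type} [Preorder ι] [IsDirected ι (· ≤ ·)] [Nonempty ι]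
    [Preorder κ] [IsDirected κ (· ≤ ·)] [Nonempty κ]
    (f : ι → X) (x : X) (φ : κ → ι), conv f x →
    (∀ α₀ : ι, ∃ β₀ : κ, ∀ β, β₀ ≤ β → α₀ ≤ φ β) → conv (fun β => f (φ β)) x

/-- The Archimedean property for a vector lattice. -/
def IsArchimedeanVL (X : Type*) [Lattice X] [AddCommGroup X] : Prop :=
  ∀ x y : X, 0 ≤ x → (∀ n : ℕ, n • x ≤ y) → x = 0

variable {X : Type*} [Lattice X] [AddCommGroup X]
  [CovariantClass X X (· + ·) (· ≤ ·)] [Module ℝ X] [PosSMulMono ℝ X]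

/-- The unbounded modification `uθ` of a convergence `θ`:
`x_α →uθ x` iff `(x_α ⊔ b) ⊓ c →θ (x ⊔ b) ⊓ c` for all `b ≤ c`. -/
def VLConvergence.uconv (θ : VLConvergence X)
    {ι : Type} [Preorder ι] [IsDirected ι (· ≤ ·)] [Nonempty ι]
    (f : ι → X) (x : X) : Prop :=
  ∀ b c : X, b ≤ c → θ.conv (fun α => (f α ⊔ b) ⊓ c) ((x ⊔ b) ⊓ c)

/-- Property (*): whenever `0 ≤ x_α ≤ u_β + a (β, α)`, where `u_β →θ 0` and, for each
fixed `β`, the net `(a (β, α))_α` `θ`-converges to `0`, then `x_α →θ 0`. -/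
def VLConvergence.StarProperty (θ : VLConvergence X) : Prop :=
  ∀ {ι κ : Type} [Preorder ι] [IsDirected ι (· ≤ ·)] [Nonempty ι]
    [Preorder κ] [IsDirected κ (· ≤ ·)] [Nonempty κ]
    (x : ι → X) (u : κ → X) (a : κ → ι → X),
    (∀ α, 0 ≤ x α) → (∀ β α, x α ≤ u β + a β α) →
    θ.conv u 0 → (∀ β, θ.conv (a β) 0) → θ.conv x 0

/-- `e` is a `θ`-unit if `x ⊓ n • e →θ x` (as `n → ∞`) for every `x ∈ X₊`. -/
def VLConvergence.IsThetaUnit (θ : VLConvergence X) (e : X) : Prop :=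
  ∀ x : X, 0 ≤ x → θ.conv (fun n : ℕ => x ⊓ n • e) x

/-!
For `(ii) → (i)` fix `b ≤ c` and write `P t = (t ⊔ b) ⊓ c`. Since `P` is `1`-Lipschitz with values
in `[b, c]`, cutting `f α` at `m • e` and `c - b` at `k • e` gives
`|P (f α) - P x| ≤ u (m, k) + a (m, k) α`, where `u (m, k)` only involves `x ⊓ m • e - x` and
`(c - b) ⊓ k • e - (c - b)`, so it `θ`-converges to `0` because `e` is a `θ`-unit, and
`a (m, k)` only involves `f α ⊓ n • e - x ⊓ n • e` for `n ∈ {m, m + k}`, so it `θ`-converges to `0`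
by `(ii)`. Property (*) then gives `P (f α) →θ P x`. For `(i) → (ii)` take `b = 0`, `c = k • e`.
-/

section LatticeOrderedGroup

variable {G : Type*} [Lattice G] [AddCommGroup G] [AddLeftMono G]

theorem abs_sup_inf_sub_sup_inf_le {b c : G} (hbc : b ≤ c) (y z : G) :
    |(y ⊔ b) ⊓ c - (z ⊔ b) ⊓ c| ≤ |y - z| ⊓ (c - b) := by
  refine le_inf ((abs_inf_sub_inf_le_abs _ _ _).trans (abs_sup_sub_sup_le_abs _ _ _)) ?_
  have hb : ∀ t : G, b ≤ (t ⊔ b) ⊓ c := fun t => le_inf le_sup_right hbc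
  refine abs_le'.2 ⟨sub_le_sub inf_le_right (hb z), ?_⟩
  rw [neg_sub]
  exact sub_le_sub inf_le_right (hb y)

theorem sub_inf_inf_le (y w a d : G) :
    (y - y ⊓ a) ⊓ w ≤ (w - w ⊓ d) + (y ⊓ (a + d) - y ⊓ a) := by
  have hw : 0 ≤ w - w ⊓ d := sub_nonneg.2 inf_le_left
  calc (y - y ⊓ a) ⊓ w
      ≤ (y - y ⊓ a) ⊓ ((w - w ⊓ d) + d) :=
        inf_le_inf_left _ <| (sub_add_cancel w (w ⊓ d)).symm.le.trans <| by
          gcongr; exact inf_le_right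
    _ ≤ ((w - w ⊓ d) + (y - y ⊓ a)) ⊓ ((w - w ⊓ d) + d) :=
        inf_le_inf_right _ (le_add_of_nonneg_left hw)
    _ = (w - w ⊓ d) + (y - y ⊓ a) ⊓ d := (add_inf _ _ _).symm
    _ ≤ (w - w ⊓ d) + (y ⊓ (a + d) - y ⊓ a) := by
        refine add_le_add_right (le_sub_iff_add_le.2 ?_) _
        calc (y - y ⊓ a) ⊓ d + y ⊓ a = y ⊓ (d + y ⊓ a) := by rw [inf_add, sub_add_cancel]
          _ ≤ y ⊓ (a + d) := inf_le_inf_left _ (by rw [add_comm a]; gcongr; exact inf_le_right)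

theorem inf_add_sub_inf_le (y x a d : G) :
    y ⊓ (a + d) - y ⊓ a ≤ |y ⊓ (a + d) - x ⊓ (a + d)| + |y ⊓ a - x ⊓ a| + |x ⊓ a - x| := by
  calc y ⊓ (a + d) - y ⊓ a
      = (y ⊓ (a + d) - x ⊓ (a + d)) + (x ⊓ a - y ⊓ a) + (x ⊓ (a + d) - x ⊓ a) := by abel
    _ ≤ |y ⊓ (a + d) - x ⊓ (a + d)| + |y ⊓ a - x ⊓ a| + |x ⊓ a - x| := by
        gcongr
        · exact le_abs_self _
        · exact abs_sub_comm (y ⊓ a) _ ▸ le_abs_self _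
        · exact abs_sub_comm x _ ▸ (sub_le_sub_right inf_le_left _).trans (le_abs_self _)

theorem abs_sup_inf_sub_sup_inf_le_add {b c : G} (hbc : b ≤ c) (y x a d : G) :
    |(y ⊔ b) ⊓ c - (x ⊔ b) ⊓ c| ≤
      (|(c - b) ⊓ d - (c - b)| + |x ⊓ a - x| + |x ⊓ a - x|) +
        (|y ⊓ (a + d) - x ⊓ (a + d)| + |y ⊓ a - x ⊓ a| + |y ⊓ a - x ⊓ a|) := by
  set P : G → G := fun t => (t ⊔ b) ⊓ c
  have head : |P y - P (y ⊓ a)| ≤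
      |(c - b) ⊓ d - (c - b)| + (|y ⊓ (a + d) - x ⊓ (a + d)| + |y ⊓ a - x ⊓ a| + |x ⊓ a - x|) :=
    calc |P y - P (y ⊓ a)| ≤ (y - y ⊓ a) ⊓ (c - b) := by
          simpa only [abs_of_nonneg (sub_nonneg.2 (inf_le_left : y ⊓ a ≤ y))]
            using abs_sup_inf_sub_sup_inf_le hbc y (y ⊓ a)
      _ ≤ ((c - b) - (c - b) ⊓ d) + (y ⊓ (a + d) - y ⊓ a) := sub_inf_inf_le y (c - b) a d
      _ ≤ _ := by
          rw [abs_sub_comm, abs_of_nonneg (sub_nonneg.2 inf_le_left)]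
          exact add_le_add_right (inf_add_sub_inf_le y x a d) _
  have hP : ∀ s t : G, |P s - P t| ≤ |s - t| := fun s t =>
    (abs_sup_inf_sub_sup_inf_le hbc s t).trans inf_le_left
  calc |P y - P x|
      = |(P y - P (y ⊓ a)) + (P (y ⊓ a) - P (x ⊓ a)) + (P (x ⊓ a) - P x)| := by
        congr 1; abel
    _ ≤ |P y - P (y ⊓ a)| + |P (y ⊓ a) - P (x ⊓ a)| + |P (x ⊓ a) - P x| :=
        (abs_add_le _ _).trans (add_le_add_left (abs_add_le _ _) _)
    _ ≤ (|(c - b) ⊓ d - (c - b)| + (|y ⊓ (a + d) - x ⊓ (a + d)| + |y ⊓ a - x ⊓ a| + |x ⊓ a - x|))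
          + |y ⊓ a - x ⊓ a| + |x ⊓ a - x| :=
        add_le_add (add_le_add head (hP _ _)) (hP _ _)
    _ = _ := by abel

end LatticeOrderedGroup

namespace VLConvergence

variable {V : Type*} [Lattice V] [AddCommGroup V] [Module ℝ V] (θ : VLConvergence V)
  {ι : Type} [Preorder ι] [IsDirected ι (· ≤ ·)] [Nonempty ι]

theorem conv_add {f g : ι → V} {x y : V} (hf : θ.conv f x) (hg : θ.conv g y) :
    θ.conv (fun α => f α + g α) (x + y) := by
  simpa only [one_smul] using θ.conv_add_smul f g x y 1 hf hg

theorem conv_iff_abs_sub_conv_zero [AddLeftMono V] {f : ι → V} {x : V} :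
    θ.conv f x ↔ θ.conv (fun α => |f α - x|) 0 := by
  constructor
  · intro hf
    have hsub : θ.conv (fun α => f α - x) 0 := by
      simpa only [neg_one_smul, ← sub_eq_add_neg, sub_self]
        using θ.conv_add_smul f _ x x (-1) hf (θ.conv_const x)
    exact θ.conv_dominated _ _ hsub fun _ => (abs_abs _).le
  · intro habs
    have hsub : θ.conv (fun α => f α - x) 0 :=
      θ.conv_dominated _ _ habs fun _ => (abs_abs _).ge
    simpa only [sub_add_cancel, zero_add] using θ.conv_add hsub (θ.conv_const x)

theorem conv_inf_of_uconv {f : ι → V} {x c : V} (hf : ∀ α, 0 ≤ f α) (hx : 0 ≤ x) (hc : 0 ≤ c)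
    (h : θ.uconv f x) : θ.conv (fun α => f α ⊓ c) (x ⊓ c) := by
  simpa only [sup_of_le_left (hf _), sup_of_le_left hx] using h 0 c hc

theorem uconv_of_forall_conv_inf_nsmul [AddLeftMono V] (hstar : θ.StarProperty) {e : V}
    (hunit : θ.IsThetaUnit e) {f : ι → V} {x : V} (hx : 0 ≤ x)
    (h : ∀ k : ℕ, θ.conv (fun α => f α ⊓ k • e) (x ⊓ k • e)) : θ.uconv f x := by
  intro b c hbc
  have hunit_abs : ∀ y : V, 0 ≤ y → θ.conv (fun n : ℕ => |y ⊓ n • e - y|) 0 := fun y hy =>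
    (θ.conv_iff_abs_sub_conv_zero).1 (hunit y hy)
  have hu : θ.conv (fun p : ℕ × ℕ =>
      |(c - b) ⊓ p.2 • e - (c - b)| + |x ⊓ p.1 • e - x| + |x ⊓ p.1 • e - x|) 0 := by
    have hw := θ.conv_subnet _ _ Prod.snd (hunit_abs _ (sub_nonneg.2 hbc))
      fun k => ⟨(0, k), fun _ hp => (Prod.le_def.1 hp).2⟩
    have hx' := θ.conv_subnet _ _ Prod.fst (hunit_abs x hx)
      fun m => ⟨(m, 0), fun _ hp => (Prod.le_def.1 hp).1⟩
    simpa only [add_zero] using θ.conv_add (θ.conv_add hw hx') hx'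
  have ha : ∀ p : ℕ × ℕ, θ.conv (fun α =>
      |f α ⊓ (p.1 • e + p.2 • e) - x ⊓ (p.1 • e + p.2 • e)| +
        |f α ⊓ p.1 • e - x ⊓ p.1 • e| + |f α ⊓ p.1 • e - x ⊓ p.1 • e|) 0 := by
    rintro ⟨m, k⟩
    have hmk := (θ.conv_iff_abs_sub_conv_zero).1 (h (m + k))
    have hm := (θ.conv_iff_abs_sub_conv_zero).1 (h m)
    simpa only [add_zero, add_nsmul] using θ.conv_add (θ.conv_add hmk hm) hm
  rw [conv_iff_abs_sub_conv_zero]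
  exact hstar _ _ _ (fun _ => abs_nonneg _)
    (fun p α => abs_sup_inf_sub_sup_inf_le_add hbc _ _ _ _) hu ha

end VLConvergence

theorem stmt10_general (θ : VLConvergence X)
    (hstar : θ.StarProperty) (e : X) (he : 0 ≤ e) (hunit : θ.IsThetaUnit e)
    {ι : Type} [Preorder ι] [IsDirected ι (· ≤ ·)] [Nonempty ι]
    (f : ι → X) (x : X) (hf : ∀ α, 0 ≤ f α) (hx : 0 ≤ x) :
    θ.uconv f x ↔ ∀ k : ℕ, θ.conv (fun α => f α ⊓ k • e) (x ⊓ k • e) :=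
  ⟨fun h k => θ.conv_inf_of_uconv hf hx (nsmul_nonneg he k) h,
    θ.uconv_of_forall_conv_inf_nsmul hstar hunit hx⟩

theorem stmt10 (hArch : IsArchimedeanVL X) (θ : VLConvergence X)
    (hstar : θ.StarProperty) (e : X) (he : 0 ≤ e) (hunit : θ.IsThetaUnit e)
    {ι : Type} [Preorder ι] [IsDirected ι (· ≤ ·)] [Nonempty ι]
    (f : ι → X) (x : X) (hf : ∀ α, 0 ≤ f α) (hx : 0 ≤ x) :
    θ.uconv f x ↔ ∀ k : ℕ, θ.conv (fun α => f α ⊓ k • e) (x ⊓ k • e) :=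
  stmt10_general θ hstar e he hunit f x hf hx
end

section
/- Let X be an Archimedean vector lattice equipped with a convergence θ (satisfying axioms (1)–(4)) and let Y be a vector sublattice of X. Then Y is θ-closed in X if and only if Y is uθ-closed in X. -/
open Filter

variable {X : Type*} [Lattice X] [AddCommGroup X]
  [CovariantClass X X (· + ·) (· ≤ ·)] [Module ℝ X] [PosSMulMono ℝ X]

/-- `Y` is `θ`-closed: every `θ`-limit of a net with values in `Y` belongs to `Y`. -/
def VLConvergence.IsClosedSet (θ : VLConvergence X) (Y : Set X) : Prop :=
  ∀ (ι : Type) [Preorder ι] [IsDirected ι (· ≤ ·)] [Nonempty ι] (f : ι → X) (x : X),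
    (∀ α, f α ∈ Y) → θ.conv f x → x ∈ Y

/-- `Y` is `uθ`-closed: every `uθ`-limit of a net with values in `Y` belongs to `Y`. -/
def VLConvergence.IsUClosedSet (θ : VLConvergence X) (Y : Set X) : Prop :=
  ∀ (ι : Type) [Preorder ι] [IsDirected ι (· ≤ ·)] [Nonempty ι] (f : ι → X) (x : X),
    (∀ α, f α ∈ Y) → θ.uconv f x → x ∈ Y


/-!
Truncation `a ↦ (a ⊔ b) ⊓ c` does not increase `|a - a'|`, so by domination every `θ`-convergent
net is `uθ`-convergent; hence `uθ`-closed sets are `θ`-closed.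

Conversely, let `Y` be a `θ`-closed sublattice. Writing `x = x⁺ - x⁻` reduces the problem to a
net `0 ≤ g_α ∈ Y` with `g_α →uθ y ≥ 0`. Truncating at `0` and `g_α ⊔ y` gives
`g_β ⊓ (g_α ⊔ y) →θ y` in `β`, hence `g_β ⊓ g_α →θ y ⊓ g_α`, so `y ⊓ g_α ∈ Y`; truncating at `0`
and `y` gives `g_α ⊓ y →θ y`, so `y ∈ Y`.
-/

namespace VLConvergence

variable {E : Type*} [Lattice E] [AddCommGroup E] [Module ℝ E] {θ : VLConvergence E}
  {ι : Type} [Preorder ι] [IsDirected ι (· ≤ ·)] [Nonempty ι] {f g : ι → E} {x y : E}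

lemma conv_neg (h : θ.conv f x) : θ.conv (fun α => -f α) (-x) := by
  simpa using θ.conv_add_smul (fun _ => 0) f 0 x (-1) (θ.conv_const 0) h

lemma conv_sub_const (h : θ.conv f x) : θ.conv (fun α => f α - x) 0 := by
  simpa [sub_eq_add_neg] using θ.conv_add_smul f (fun _ => x) x x (-1) h (θ.conv_const x)

lemma conv_add_const (h : θ.conv f 0) (z : E) : θ.conv (fun α => f α + z) z := by
  simpa using θ.conv_add_smul f (fun _ => z) 0 z 1 h (θ.conv_const z)

lemma conv_of_abs_sub_le (h : θ.conv f x) (hgf : ∀ α, |g α - y| ≤ |f α - x|) :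
    θ.conv g y := by
  have hg : θ.conv (fun α => g α - y) 0 :=
    θ.conv_dominated _ _ (conv_sub_const h) (by simpa using hgf)
  simpa using conv_add_const hg y

lemma conv_inf_of_uconv_of_nonneg (h : θ.uconv g y) (hg : ∀ α, 0 ≤ g α) (hy : 0 ≤ y)
    {c : E} (hc : 0 ≤ c) : θ.conv (fun α => g α ⊓ c) (y ⊓ c) := by
  have hsup : ∀ α, g α ⊔ 0 = g α := fun α => sup_eq_left.2 (hg α)
  simpa only [hsup, sup_eq_left.2 hy] using h 0 c hc

variable [AddLeftMono E]

lemma conv_sup_const (h : θ.conv f x) (z : E) : θ.conv (fun α => f α ⊔ z) (x ⊔ z) :=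
  conv_of_abs_sub_le h fun _ => abs_sup_sub_sup_le_abs _ _ _

lemma conv_inf_const (h : θ.conv f x) (z : E) : θ.conv (fun α => f α ⊓ z) (x ⊓ z) :=
  conv_of_abs_sub_le h fun _ => abs_inf_sub_inf_le_abs _ _ _

lemma uconv_of_conv (h : θ.conv f x) : θ.uconv f x :=
  fun b c _ => conv_inf_const (conv_sup_const h b) c

lemma uconv_sup_const (h : θ.uconv f x) (z : E) : θ.uconv (fun α => f α ⊔ z) (x ⊔ z) := by
  let _ : DistribLattice E := AddCommGroup.toDistribLattice E
  intro b c _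
  -- `(a ⊔ z ⊔ b) ⊓ c` is the truncation of `a` between `(z ⊔ b) ⊓ c` and `c`.
  have htrunc : ∀ a : E, (a ⊔ (z ⊔ b) ⊓ c) ⊓ c = (a ⊔ z ⊔ b) ⊓ c := fun a => by
    rw [inf_sup_right, inf_assoc, inf_idem, ← inf_sup_right, sup_assoc]
  simpa only [htrunc] using h ((z ⊔ b) ⊓ c) c inf_le_right

lemma uconv_neg (h : θ.uconv f x) : θ.uconv (fun α => -f α) (-x) := by
  let _ : DistribLattice E := AddCommGroup.toDistribLattice E
  intro b c hbc
  have hreflect : ∀ a : E, -((a ⊔ -c) ⊓ -b) = (-a ⊔ b) ⊓ c := fun a => by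
    rw [neg_inf, neg_sup, neg_neg, neg_neg, sup_inf_right, sup_eq_left.2 hbc]
  simpa only [hreflect] using conv_neg (h (-c) (-b) (neg_le_neg_iff.2 hbc))

lemma uconv_posPart (h : θ.uconv f x) : θ.uconv (fun α => (f α)⁺) x⁺ :=
  uconv_sup_const h 0

lemma uconv_negPart (h : θ.uconv f x) : θ.uconv (fun α => (f α)⁻) x⁻ :=
  uconv_posPart (uconv_neg h)

lemma IsClosedSet.mem_of_uconv_of_nonneg {Y : Set E} (hY : θ.IsClosedSet Y)
    (hinf : ∀ a ∈ Y, ∀ b ∈ Y, a ⊓ b ∈ Y) (hgY : ∀ α, g α ∈ Y) (hg : ∀ α, 0 ≤ g α)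
    (hy : 0 ≤ y) (h : θ.uconv g y) : y ∈ Y := by
  have hinf_mem : ∀ α, y ⊓ g α ∈ Y := fun α => by
    have hcut : θ.conv (fun β => g β ⊓ (g α ⊔ y)) y := by
      simpa only [inf_eq_left.2 (le_sup_right : y ≤ g α ⊔ y)] using
        conv_inf_of_uconv_of_nonneg h hg hy (c := g α ⊔ y) (hy.trans le_sup_right)
    have hcut' : θ.conv (fun β => g β ⊓ g α) (y ⊓ g α) := by
      simpa only [inf_assoc, inf_eq_right.2 (le_sup_left : g α ≤ g α ⊔ y)] using
        conv_inf_const hcut (g α)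
    exact hY ι _ _ (fun β => hinf _ (hgY β) _ (hgY α)) hcut'
  have hlim : θ.conv (fun α => g α ⊓ y) y := by
    simpa only [inf_idem] using conv_inf_of_uconv_of_nonneg h hg hy hy
  exact hY ι _ _ (fun α => inf_comm y (g α) ▸ hinf_mem α) hlim

end VLConvergence

lemma AddSubgroup.inf_mem_of_sup_mem {E : Type*} [Lattice E] [AddCommGroup E] [AddLeftMono E]
    (Y : AddSubgroup E) (hsup : ∀ a ∈ Y, ∀ b ∈ Y, a ⊔ b ∈ Y)
    {a b : E} (ha : a ∈ Y) (hb : b ∈ Y) : a ⊓ b ∈ Y := by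
  rw [← add_sub_cancel_right (a ⊓ b) (a ⊔ b), inf_add_sup]
  exact Y.sub_mem (Y.add_mem ha hb) (hsup a ha b hb)

theorem stmt14_general (θ : VLConvergence X)
    (Y : Submodule ℝ X) (hYlat : ∀ a b : X, a ∈ Y → b ∈ Y → a ⊔ b ∈ Y) :
    θ.IsClosedSet (Y : Set X) ↔ θ.IsUClosedSet (Y : Set X) := by
  refine ⟨fun hY ι _ _ _ f x hf hfx => ?_, fun hY ι _ _ _ f x hf hfx =>
    hY ι f x hf (VLConvergence.uconv_of_conv hfx)⟩
  have hinf : ∀ a ∈ (Y : Set X), ∀ b ∈ (Y : Set X), a ⊓ b ∈ (Y : Set X) :=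
    fun a ha b hb => Y.toAddSubgroup.inf_mem_of_sup_mem (fun a ha b hb => hYlat a b ha hb) ha hb
  have hpos : ∀ a ∈ Y, a⁺ ∈ Y := fun a ha => hYlat a 0 ha Y.zero_mem
  have hneg : ∀ a ∈ Y, a⁻ ∈ Y := fun a ha => hpos (-a) (Y.neg_mem ha)
  rw [← posPart_sub_negPart x]
  exact Y.sub_mem
    (hY.mem_of_uconv_of_nonneg hinf (fun α => hpos _ (hf α)) (fun _ => posPart_nonneg _)
      (posPart_nonneg x) (VLConvergence.uconv_posPart hfx))
    (hY.mem_of_uconv_of_nonneg hinf (fun α => hneg _ (hf α)) (fun _ => negPart_nonneg _)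
      (negPart_nonneg x) (VLConvergence.uconv_negPart hfx))

theorem stmt14 (hArch : IsArchimedeanVL X) (θ : VLConvergence X)
    (Y : Submodule ℝ X) (hYlat : ∀ a b : X, a ∈ Y → b ∈ Y → a ⊔ b ∈ Y) :
    θ.IsClosedSet (Y : Set X) ↔ θ.IsUClosedSet (Y : Set X) :=
  stmt14_general θ Y hYlat
end
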